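/- Let (E, ω) be a symplectic vector space. Then there exist a natural number n with dim_ℝ E = 2n and a symplectic basis of E, i.e. a basis indexed by Fin n ⊕ Fin n, written a_1, …, a_n, a_{n+1}, …, a_{2n}, such that ω(a_i, a_j) = 0 for 1 ≤ i,j ≤ n, ω(a_{n+i}, a_{n+j}) = 0 for 1 ≤ i,j ≤ n, and ω(a_i, a_{n+j}) = δ_{ij} for 1 ≤ i,j ≤ n; equivalently, the matrix of ω in this basis is the standard block matrix [[0, I_n],[−I_n, 0]]. -/

import Mathlib

open Module Submodule

private lemma symp_skew {E : Type*} [AddCommGroup E] [Module ℝ E]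
    (ω : E →ₗ[ℝ] E →ₗ[ℝ] ℝ) (halt : ∀ u : E, ω u u = 0) (x y : E) :
    ω x y = - ω y x := by
  have h := halt (x + y)
  simp only [map_add, LinearMap.add_apply, halt] at h
  linarith

private def sympSwap (α β γ δ : Type*) : (α ⊕ β) ⊕ (γ ⊕ δ) ≃ (α ⊕ γ) ⊕ (β ⊕ δ) where
  toFun x := match x with
    | .inl (.inl a) => .inl (.inl a)
    | .inl (.inr b) => .inr (.inl b)
    | .inr (.inl c) => .inl (.inr c)
    | .inr (.inr d) => .inr (.inr d)
  invFun x := match x with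
    | .inl (.inl a) => .inl (.inl a)
    | .inl (.inr c) => .inr (.inl c)
    | .inr (.inl b) => .inl (.inr b)
    | .inr (.inr d) => .inr (.inr d)
  left_inv x := by rcases x with (a | b) | (c | d) <;> rfl
  right_inv x := by rcases x with (a | c) | (b | d) <;> rfl

@[simp] private lemma sympSwap_symm_inl_inl {α β γ δ : Type*} (a : α) :
    (sympSwap α β γ δ).symm (Sum.inl (Sum.inl a)) = Sum.inl (Sum.inl a) := rfl
@[simp] private lemma sympSwap_symm_inl_inr {α β γ δ : Type*} (c : γ) :
    (sympSwap α β γ δ).symm (Sum.inl (Sum.inr c)) = Sum.inr (Sum.inl c) := rfl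
@[simp] private lemma sympSwap_symm_inr_inl {α β γ δ : Type*} (b : β) :
    (sympSwap α β γ δ).symm (Sum.inr (Sum.inl b)) = Sum.inl (Sum.inr b) := rfl
@[simp] private lemma sympSwap_symm_inr_inr {α β γ δ : Type*} (d : δ) :
    (sympSwap α β γ δ).symm (Sum.inr (Sum.inr d)) = Sum.inr (Sum.inr d) := rfl

universe u

private theorem symp_aux (k : ℕ) : ∀ (E : Type u) [AddCommGroup E] [Module ℝ E]
    [FiniteDimensional ℝ E] (ω : E →ₗ[ℝ] E →ₗ[ℝ] ℝ),
    (∀ u : E, ω u u = 0) →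
    (∀ u : E, (∀ v : E, ω u v = 0) → u = 0) →
    Module.finrank ℝ E ≤ k →
    ∃ (n : ℕ) (b : Basis (Fin n ⊕ Fin n) ℝ E),
      Module.finrank ℝ E = 2 * n ∧
      (∀ i j : Fin n, ω (b (Sum.inl i)) (b (Sum.inl j)) = 0) ∧
      (∀ i j : Fin n, ω (b (Sum.inr i)) (b (Sum.inr j)) = 0) ∧
      (∀ i j : Fin n, ω (b (Sum.inl i)) (b (Sum.inr j)) = if i = j then 1 else 0) := by
  induction k with
  | zero =>
    intro E _ _ _ ω halt hnd hle
    have h0 : Module.finrank ℝ E = 0 := Nat.le_zero.mp hle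
    have : Subsingleton E := Module.finrank_zero_iff.mp h0
    exact ⟨0, Basis.empty _, by simp [h0], fun i => i.elim0, fun i => i.elim0, fun i => i.elim0⟩
  | succ k ih =>
    intro E _ _ _ ω halt hnd hle
    by_cases h0 : Module.finrank ℝ E = 0
    · have : Subsingleton E := Module.finrank_zero_iff.mp h0
      exact ⟨0, Basis.empty _, by simp [h0], fun i => i.elim0, fun i => i.elim0, fun i => i.elim0⟩
    -- pick u ≠ 0 and v with ω u v = 1
    have : Nontrivial E := Module.nontrivial_of_finrank_pos (R := ℝ) (Nat.pos_of_ne_zero h0)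
    obtain ⟨u, hu⟩ := exists_ne (0 : E)
    have hv' : ∃ v' : E, ω u v' ≠ 0 := by
      by_contra h
      push_neg at h
      exact hu (hnd u h)
    obtain ⟨v', hv'⟩ := hv'
    obtain ⟨v, huv⟩ : ∃ v : E, ω u v = 1 :=
      ⟨(ω u v')⁻¹ • v', by simp [map_smul, inv_mul_cancel₀ hv']⟩
    have hvu : ω v u = -1 := by rw [symp_skew ω halt, huv]
    -- the plane p spanned by u, v
    set f : Fin 1 ⊕ Fin 1 → E := Sum.elim (fun _ => u) (fun _ => v) with hfdef
    have hfli : LinearIndependent ℝ f := by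
      rw [linearIndependent_iff']
      intro s g hsum
      have key : ∀ (w : E), ω w (∑ i ∈ s, g i • f i) = 0 := by
        intro w; rw [hsum, map_zero]
      intro i hi
      have h1 := key u
      have h2 := key v
      simp only [map_sum, map_smul, smul_eq_mul] at h1 h2
      rcases i with i | i
      · have : ∀ j ∈ s, g j * ω v (f j) = (if j = Sum.inl i then -g j else 0) := by
          intro j _
          rcases j with j | j
          · have : j = i := Subsingleton.elim j i
            subst this
            simp [hfdef, hvu]
          · simp [hfdef, halt]
        rw [Finset.sum_congr rfl this, Finset.sum_ite_eq' s (Sum.inl i)] at h2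
        simp only [hi, if_true] at h2
        linarith
      · have : ∀ j ∈ s, g j * ω u (f j) = (if j = Sum.inr i then g j else 0) := by
          intro j _
          rcases j with j | j
          · simp [hfdef, halt]
          · have : j = i := Subsingleton.elim j i
            subst this
            simp [hfdef, huv]
        rw [Finset.sum_congr rfl this, Finset.sum_ite_eq' s (Sum.inr i)] at h1
        simpa only [hi, if_true] using h1
    set p : Submodule ℝ E := span ℝ (Set.range f) with hpdef
    have hrange : Set.range f = {u, v} := by
      ext x
      constructor
      · rintro ⟨i | i, rfl⟩ <;> simp [hfdef]
      · rintro (rfl | rfl)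
        · exact ⟨Sum.inl 0, rfl⟩
        · exact ⟨Sum.inr 0, rfl⟩
    set bp : Basis (Fin 1 ⊕ Fin 1) ℝ p := Basis.span hfli with hbpdef
    -- the symplectic complement W
    set W : Submodule ℝ E := LinearMap.ker (ω u) ⊓ LinearMap.ker (ω v) with hWdef
    have hmemW : ∀ x : E, x ∈ W ↔ ω u x = 0 ∧ ω v x = 0 := by
      intro x; simp [hWdef, LinearMap.mem_ker]
    have hdecompW : ∀ x : E, x - ((ω u x) • v - (ω v x) • u) ∈ W := by
      intro x
      rw [hmemW]
      constructor
      · simp [map_sub, map_smul, huv, halt]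
      · simp only [map_sub, map_smul, smul_eq_mul, huv, hvu, halt]
        ring
    have hdecompP : ∀ x : E, (ω u x) • v - (ω v x) • u ∈ p := by
      intro x
      have hup : u ∈ p := subset_span (by rw [hrange]; left; rfl)
      have hvp : v ∈ p := subset_span (by rw [hrange]; right; rfl)
      exact sub_mem (smul_mem _ _ hvp) (smul_mem _ _ hup)
    have hcompl : IsCompl p W := by
      constructor
      · rw [disjoint_iff, eq_bot_iff]
        intro x hx
        have hxp : x ∈ span ℝ ({u, v} : Set E) := by
          have := (Submodule.mem_inf.mp hx).1
          rwa [hpdef, hrange] at this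
        have hxW := (Submodule.mem_inf.mp hx).2
        rw [Submodule.mem_span_pair] at hxp
        obtain ⟨a, b, rfl⟩ := hxp
        rw [hmemW] at hxW
        obtain ⟨h1, h2⟩ := hxW
        simp only [map_add, map_smul, smul_eq_mul, halt, huv, hvu, mul_zero, mul_one,
          zero_add, add_zero, mul_neg_one] at h1 h2
        have ha : a = 0 := by linarith
        have hb : b = 0 := h1
        simp [ha, hb]
      · rw [codisjoint_iff, eq_top_iff]
        intro x _
        rw [Submodule.mem_sup]
        exact ⟨_, hdecompP x, _, hdecompW x, by abel⟩
    -- restrict ω to W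
    set ω' : W →ₗ[ℝ] W →ₗ[ℝ] ℝ := ω.compl₁₂ W.subtype W.subtype with hω'def
    have hω'apply : ∀ x y : W, ω' x y = ω (x : E) (y : E) := fun x y => rfl
    have halt' : ∀ x : W, ω' x x = 0 := fun x => halt x
    have hWu : ∀ x : W, ω u (x : E) = 0 := fun x => ((hmemW x).mp x.2).1
    have hWv : ∀ x : W, ω v (x : E) = 0 := fun x => ((hmemW x).mp x.2).2
    have huW : ∀ x : W, ω (x : E) u = 0 := by
      intro x; rw [symp_skew ω halt, hWu]; ring
    have hvW : ∀ x : W, ω (x : E) v = 0 := by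
      intro x; rw [symp_skew ω halt, hWv]; ring
    have hnd' : ∀ x : W, (∀ y : W, ω' x y = 0) → x = 0 := by
      intro x hx
      have : (x : E) = 0 := by
        apply hnd
        intro y
        have hyd : y = ((ω u y) • v - (ω v y) • u) + (y - ((ω u y) • v - (ω v y) • u)) := by abel
        rw [hyd, map_add]
        have h1 : ω (x : E) ((ω u y) • v - (ω v y) • u) = 0 := by
          rw [map_sub, map_smul, map_smul, huW x, hvW x]
          simp
        rw [h1, zero_add]
        exact hx ⟨_, hdecompW y⟩
      exact Subtype.ext this
    -- dimensions
    have hrankp : Module.finrank ℝ p = 2 := by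
      rw [finrank_eq_card_basis bp]
      simp
    have hranksum : Module.finrank ℝ p + Module.finrank ℝ W = Module.finrank ℝ E :=
      Submodule.finrank_add_eq_of_isCompl hcompl
    have hrankW : Module.finrank ℝ W ≤ k := by omega
    obtain ⟨m, c, hcrank, hc1, hc2, hc3⟩ := ih W ω' halt' hnd' hrankW
    -- build the basis of E
    refine ⟨1 + m, ?_⟩
    set eqv : (p × W) ≃ₗ[ℝ] E := Submodule.prodEquivOfIsCompl p W hcompl with heqvdef
    set E' : ((Fin 1 ⊕ Fin 1) ⊕ (Fin m ⊕ Fin m)) ≃ (Fin (1 + m) ⊕ Fin (1 + m)) :=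
      (sympSwap (Fin 1) (Fin 1) (Fin m) (Fin m)).trans
        (finSumFinEquiv.sumCongr finSumFinEquiv) with hE'def
    set b : Basis (Fin (1 + m) ⊕ Fin (1 + m)) ℝ E := (((bp.prod c).map eqv).reindex E') with hbdef
    have hbl1 : b (Sum.inl (finSumFinEquiv (Sum.inl 0))) = u := by
      simp only [hbdef, Basis.reindex_apply, hE'def, Equiv.symm_trans_apply,
        Equiv.sumCongr_symm, Equiv.sumCongr_apply, Sum.map_inl, Equiv.symm_apply_apply,
        sympSwap_symm_inl_inl, sympSwap_symm_inl_inr, sympSwap_symm_inr_inl, sympSwap_symm_inr_inr]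
      simp only [Basis.map_apply, Basis.prod_apply, Sum.elim_inl, Function.comp_apply,
        heqvdef, Submodule.coe_prodEquivOfIsCompl', LinearMap.inl_apply]
      simp only [ZeroMemClass.coe_zero, add_zero, hbpdef]
      exact congrArg Subtype.val (Basis.span_apply hfli (Sum.inl 0))
    have hbl2 : ∀ j : Fin m, b (Sum.inl (finSumFinEquiv (Sum.inr j))) = (c (Sum.inl j) : E) := by
      intro j
      simp only [hbdef, Basis.reindex_apply, hE'def, Equiv.symm_trans_apply,
        Equiv.sumCongr_symm, Equiv.sumCongr_apply, Sum.map_inl, Equiv.symm_apply_apply,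
        sympSwap_symm_inl_inl, sympSwap_symm_inl_inr, sympSwap_symm_inr_inl, sympSwap_symm_inr_inr]
      simp only [Basis.map_apply, Basis.prod_apply, Sum.elim_inr, Function.comp_apply,
        heqvdef, Submodule.coe_prodEquivOfIsCompl', LinearMap.inr_apply]
      simp
    have hbr1 : b (Sum.inr (finSumFinEquiv (Sum.inl 0))) = v := by
      simp only [hbdef, Basis.reindex_apply, hE'def, Equiv.symm_trans_apply,
        Equiv.sumCongr_symm, Equiv.sumCongr_apply, Sum.map_inr, Equiv.symm_apply_apply,
        sympSwap_symm_inl_inl, sympSwap_symm_inl_inr, sympSwap_symm_inr_inl, sympSwap_symm_inr_inr]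
      simp only [Basis.map_apply, Basis.prod_apply, Sum.elim_inl, Function.comp_apply,
        heqvdef, Submodule.coe_prodEquivOfIsCompl', LinearMap.inl_apply]
      simp only [ZeroMemClass.coe_zero, add_zero, hbpdef]
      exact congrArg Subtype.val (Basis.span_apply hfli (Sum.inr 0))
    have hbr2 : ∀ j : Fin m, b (Sum.inr (finSumFinEquiv (Sum.inr j))) = (c (Sum.inr j) : E) := by
      intro j
      simp only [hbdef, Basis.reindex_apply, hE'def, Equiv.symm_trans_apply,
        Equiv.sumCongr_symm, Equiv.sumCongr_apply, Sum.map_inr, Equiv.symm_apply_apply,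
        sympSwap_symm_inl_inl, sympSwap_symm_inl_inr, sympSwap_symm_inr_inl, sympSwap_symm_inr_inr]
      simp only [Basis.map_apply, Basis.prod_apply, Sum.elim_inr, Function.comp_apply,
        heqvdef, Submodule.coe_prodEquivOfIsCompl', LinearMap.inr_apply]
      simp
    refine ⟨b, by omega, ?_, ?_, ?_⟩
    · intro i j
      obtain ⟨i', rfl⟩ := finSumFinEquiv.surjective i
      obtain ⟨j', rfl⟩ := finSumFinEquiv.surjective j
      rcases i' with i' | i'
      · obtain rfl : i' = 0 := Subsingleton.elim _ _
        rcases j' with j' | j'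
        · obtain rfl : j' = 0 := Subsingleton.elim _ _
          rw [hbl1]; exact halt u
        · rw [hbl1, hbl2]; exact hWu _
      · rcases j' with j' | j'
        · obtain rfl : j' = 0 := Subsingleton.elim _ _
          rw [hbl2, hbl1]; exact huW _
        · rw [hbl2, hbl2]; exact hc1 i' j'
    · intro i j
      obtain ⟨i', rfl⟩ := finSumFinEquiv.surjective i
      obtain ⟨j', rfl⟩ := finSumFinEquiv.surjective j
      rcases i' with i' | i'
      · obtain rfl : i' = 0 := Subsingleton.elim _ _
        rcases j' with j' | j'
        · obtain rfl : j' = 0 := Subsingleton.elim _ _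
          rw [hbr1]; exact halt v
        · rw [hbr1, hbr2]; exact hWv _
      · rcases j' with j' | j'
        · obtain rfl : j' = 0 := Subsingleton.elim _ _
          rw [hbr2, hbr1]; exact hvW _
        · rw [hbr2, hbr2]; exact hc2 i' j'
    · intro i j
      obtain ⟨i', rfl⟩ := finSumFinEquiv.surjective i
      obtain ⟨j', rfl⟩ := finSumFinEquiv.surjective j
      simp only [Equiv.apply_eq_iff_eq]
      rcases i' with i' | i'
      · obtain rfl : i' = 0 := Subsingleton.elim _ _
        rcases j' with j' | j'
        · obtain rfl : j' = 0 := Subsingleton.elim _ _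
          rw [hbl1, hbr1, huv]
          simp
        · rw [hbl1, hbr2]
          simp [hWu]
      · rcases j' with j' | j'
        · obtain rfl : j' = 0 := Subsingleton.elim _ _
          rw [hbl2, hbr1]
          simp [hvW]
        · rw [hbl2, hbr2]
          have h := hc3 i' j'
          rw [hω'apply] at h
          rw [h]
          simp [Sum.inr.injEq]

/-- Every symplectic vector space `(E, ω)` has even dimension `2n`
and admits a symplectic basis `a₁, …, aₙ, a_{n+1}, …, a_{2n}` (indexed by `Fin n ⊕ Fin n`)
with `ω(aᵢ, aⱼ) = 0`, `ω(a_{n+i}, a_{n+j}) = 0` and `ω(aᵢ, a_{n+j}) = δᵢⱼ`. -/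
theorem symplectic_exists_symplectic_basis
    (E : Type*) [AddCommGroup E] [Module ℝ E] [FiniteDimensional ℝ E]
    (ω : E →ₗ[ℝ] E →ₗ[ℝ] ℝ)
    (halt : ∀ u : E, ω u u = 0)
    (hnd : ∀ u : E, (∀ v : E, ω u v = 0) → u = 0) :
    ∃ (n : ℕ) (b : Basis (Fin n ⊕ Fin n) ℝ E),
      Module.finrank ℝ E = 2 * n ∧
      (∀ i j : Fin n, ω (b (Sum.inl i)) (b (Sum.inl j)) = 0) ∧
      (∀ i j : Fin n, ω (b (Sum.inr i)) (b (Sum.inr j)) = 0) ∧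
      (∀ i j : Fin n, ω (b (Sum.inl i)) (b (Sum.inr j)) = if i = j then 1 else 0) := by
  exact symp_aux (Module.finrank ℝ E) E ω halt hnd le_rfl
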